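/- Let (A, K) be a pair over a commutative ring k. Then the full subcategory of (A, K)-modules inside weak (A, K)-modules is both reflective and coreflective: the inclusion functor J admits a left adjoint M ↦ M_𝔨 = M/N, where N is the dg submodule generated by ω(ξ)m for ξ ∈ 𝔨, m ∈ M and ω(ξ) = dν(ξ) − π(ψ(ξ)), and a right adjoint M ↦ M^𝔨 = {m ∈ M : ω(ξ)m = 0 for all ξ ∈ 𝔨}. -/

import Mathlib

/-!
STATEMENT 7: Let `(A, K)` be a pair over a commutative ring `k`.  The full
subcategory of `(A, K)`-modules inside weak `(A, K)`-modules is both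
reflective and coreflective: the inclusion functor `J` admits a left adjoint
`M ↦ M_𝔨 = M/N` (where `N` is the dg submodule generated by the `ω(ξ)m`,
`ω(ξ) = dν(ξ) − π(ψ(ξ))`) and a right adjoint
`M ↦ M^𝔨 = {m : ω(ξ)m = 0 for all ξ}`.

Formalization: pairs are modeled by the data `HCPair`: a group `G` (the points
of the flat affine group scheme `K`) with Lie algebra `𝔨 = D.L` and adjoint
action, a `K`-equivariant `k`-algebra `A` (a dg algebra concentrated in
degree 0) with the induced infinitesimal action `dφ(ξ) = [ψ(ξ), −]`, and the
equivariant Lie algebra map `ψ : 𝔨 → A`.  A weak `(A, K)`-module is a cochain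
complex of `k`-modules with commuting equivariant actions `π` of `A`, `ν` of
`K`, together with the derived action `dν` of `𝔨` (which, for an algebraic
group, is determined by `ν`); it is an `(A, K)`-module (`IsStrict`) when
`π(ψ(ξ)) = dν(ξ)`.  The statement: the inclusion of the full subcategory of
`(A,K)`-modules admits a left adjoint (`Functor.IsRightAdjoint`) and a right
adjoint (`Functor.IsLeftAdjoint`).
-/

open CategoryTheory
set_option synthInstance.maxHeartbeats 1000000
set_option maxHeartbeats 1600000

variable (k : Type) [CommRing k]

structure GroupData where
  G : Type
  [grp : Group G]
  L : Type
  [addL : AddCommGroup L]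
  [modL : Module k L]
  [lieL : LieRing L]
  [lieAlgL : LieAlgebra k L]
  Ad : G →* (L ≃ₗ[k] L)
  ad_bracket : ∀ (g : G) (x y : L), Ad g ⁅x, y⁆ = ⁅Ad g x, Ad g y⁆

attribute [instance] GroupData.grp GroupData.addL GroupData.modL GroupData.lieL GroupData.lieAlgL

variable {k}

structure WeakPair (D : GroupData k) where
  A : Type
  [ringA : Ring A]
  [algA : Algebra k A]
  φ : D.G →* (A ≃ₐ[k] A)
  dφ : D.L →ₗ[k] (A →ₗ[k] A)
  dφ_lie : ∀ x y : D.L, dφ ⁅x, y⁆ = dφ x ∘ₗ dφ y - dφ y ∘ₗ dφ x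
  dφ_der : ∀ (ξ : D.L) (a b : A), dφ ξ (a * b) = dφ ξ a * b + a * dφ ξ b
  dφ_equiv : ∀ (g : D.G) (ξ : D.L) (a : A), φ g (dφ ξ a) = dφ (D.Ad g ξ) (φ g a)

attribute [instance] WeakPair.ringA WeakPair.algA

structure HCPair (D : GroupData k) extends WeakPair D where
  ψ : D.L →ₗ[k] A
  ψ_bracket : ∀ x y : D.L, ψ ⁅x, y⁆ = ψ x * ψ y - ψ y * ψ x
  ψ_equiv : ∀ (g : D.G) (ξ : D.L), φ g (ψ ξ) = ψ (D.Ad g ξ)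
  dφ_eq : ∀ (ξ : D.L) (a : A), dφ ξ a = ψ ξ * a - a * ψ ξ

variable {D : GroupData k}

structure WeakMod (P : WeakPair D) where
  M : CochainComplex (ModuleCat.{0} k) ℤ
  π : P.A →ₐ[k] End M
  ν : D.G →* (End M)ˣ
  dν : D.L →ₗ[k] End M
  dν_lie : ∀ x y : D.L, dν ⁅x, y⁆ = dν x * dν y - dν y * dν x
  π_equiv : ∀ (g : D.G) (a : P.A), (ν g : End M) * π a = π (P.φ g a) * (ν g : End M)
  dν_equiv : ∀ (g : D.G) (ξ : D.L), (ν g : End M) * dν ξ = dν (D.Ad g ξ) * (ν g : End M)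
  dν_π : ∀ (ξ : D.L) (a : P.A), dν ξ * π a = π (P.dφ ξ a) + π a * dν ξ

namespace WeakMod

variable {P : WeakPair D}

@[ext]
structure Hom (V W : WeakMod P) where
  hom : V.M ⟶ W.M
  comm_π : ∀ a : P.A, (V.π a : V.M ⟶ V.M) ≫ hom = hom ≫ (W.π a : W.M ⟶ W.M)
  comm_ν : ∀ g : D.G, ((V.ν g : End V.M) : V.M ⟶ V.M) ≫ hom
    = hom ≫ ((W.ν g : End W.M) : W.M ⟶ W.M)
  comm_dν : ∀ ξ : D.L, (V.dν ξ : V.M ⟶ V.M) ≫ hom = hom ≫ (W.dν ξ : W.M ⟶ W.M)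

instance : Category (WeakMod P) where
  Hom := Hom
  id V := ⟨𝟙 V.M, by simp, by simp, by simp⟩
  comp f g := ⟨f.hom ≫ g.hom,
    fun a => by rw [← Category.assoc, f.comm_π, Category.assoc, g.comm_π, Category.assoc],
    fun a => by rw [← Category.assoc, f.comm_ν, Category.assoc, g.comm_ν, Category.assoc],
    fun a => by rw [← Category.assoc, f.comm_dν, Category.assoc, g.comm_dν, Category.assoc]⟩
  id_comp f := Hom.ext (by simp)
  comp_id f := Hom.ext (by simp)
  assoc f g h := Hom.ext (by simp)

/-- The forgetful functor to cochain complexes of `k`-modules. -/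
def forgetToComplex (P : WeakPair D) : WeakMod P ⥤ CochainComplex (ModuleCat.{0} k) ℤ where
  obj V := V.M
  map f := f.hom

end WeakMod

/-- An `(A,K)`-module is a weak `(A,K)`-module on which the two actions of `𝔨`
agree: `dν(ξ) = π(ψ(ξ))`. -/
def IsStrict (P : HCPair D) (V : WeakMod P.toWeakPair) : Prop :=
  ∀ ξ : D.L, V.dν ξ = V.π (P.ψ ξ)

/-!
The defect `ω(ξ) = dν(ξ) − π(ψ(ξ))` commutes with `π`, is conjugated by `ν(g)` into `ω(Ad g ξ)`,
and satisfies `[dν(η), ω(ξ)] = ω([η, ξ])`. Hence every operator in the algebra generated by the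
actions of `A`, `K` and `𝔨` preserves both the image `N` of `⊕_ξ M → M, (m_ξ) ↦ Σ ω(ξ) m_ξ` and
the kernel `M^𝔨` of `M → ∏_ξ M, m ↦ (ω(ξ) m)`, so the weak module structure descends to the
cokernel `M_𝔨 = M/N` and restricts to `M^𝔨`, on both of which `ω` vanishes. Since morphisms of weak
modules commute with `ω` and `ω = 0` on `(A, K)`-modules, a morphism from `M` to an
`(A, K)`-module kills `N`, and one into `M` lands in `M^𝔨`: these are the universal properties
of `M → M_𝔨` and `M^𝔨 → M`.
-/

open Limits Opposite

namespace CategoryTheory.ObjectProperty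

variable {C : Type*} [Category C] (Q : ObjectProperty C)

lemma isRightAdjoint_ι_of_bijective
    (h : ∀ X : C, ∃ (Y : C) (_ : Q Y) (η : X ⟶ Y),
      ∀ Z, Q Z → Function.Bijective fun g : Y ⟶ Z => η ≫ g) :
    Q.ι.IsRightAdjoint := by
  rw [Functor.isRightAdjoint_iff_leftAdjointObjIsDefined_eq_top]
  ext X
  obtain ⟨Y, hY, η, hη⟩ := h X
  simp only [Pi.top_apply, Prop.top_eq_true, iff_true]
  let e : (Q.ι ⋙ coyoneda.obj (op X)).CorepresentableBy ⟨Y, hY⟩ :=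
    { homEquiv {Z} := Q.fullyFaithfulι.homEquiv.trans (Equiv.ofBijective _ (hη Z.1 Z.2))
      homEquiv_comp _ _ := by simp [Functor.FullyFaithful.homEquiv] }
  exact e.isCorepresentable

lemma isLeftAdjoint_ι_of_bijective
    (h : ∀ X : C, ∃ (Y : C) (_ : Q Y) (ε : Y ⟶ X),
      ∀ Z, Q Z → Function.Bijective fun g : Z ⟶ Y => g ≫ ε) :
    Q.ι.IsLeftAdjoint := by
  rw [Functor.isLeftAdjoint_iff_rightAdjointObjIsDefined_eq_top]
  ext X
  obtain ⟨Y, hY, ε, hε⟩ := h X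
  simp only [Pi.top_apply, Prop.top_eq_true, iff_true]
  let e : (Q.ι.op ⋙ yoneda.obj X).RepresentableBy ⟨Y, hY⟩ :=
    { homEquiv {Z} := Q.fullyFaithfulι.homEquiv.trans (Equiv.ofBijective _ (hε Z.1 Z.2))
      homEquiv_comp _ _ := by simp [Functor.FullyFaithful.homEquiv] }
  exact e.isRepresentable

end CategoryTheory.ObjectProperty

namespace CategoryTheory.Limits

variable (R : Type*) [CommSemiring R] {C : Type*} [Category C] [Preadditive C] [Linear R C]
  {X Y : C} (f : X ⟶ Y)

def endsDescendingToCokernel : Subalgebra R (End Y) where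
  carrier := {e | ∃ t : X ⟶ X, f ≫ e = t ≫ f}
  mul_mem' := by
    rintro e₁ e₂ ⟨t₁, h₁⟩ ⟨t₂, h₂⟩
    exact ⟨t₂ ≫ t₁, by rw [End.mul_def, ← Category.assoc, h₂, Category.assoc, h₁,
      Category.assoc]⟩
  add_mem' := by
    rintro e₁ e₂ ⟨t₁, h₁⟩ ⟨t₂, h₂⟩
    exact ⟨t₁ + t₂, by rw [Preadditive.comp_add, h₁, h₂, Preadditive.add_comp]⟩
  algebraMap_mem' c := ⟨c • 𝟙 X, by
    rw [Algebra.algebraMap_eq_smul_one, End.one_def, Linear.comp_smul, Linear.smul_comp]; simp⟩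

def endsRestrictingToKernel : Subalgebra R (End X) where
  carrier := {e | ∃ t : Y ⟶ Y, e ≫ f = f ≫ t}
  mul_mem' := by
    rintro e₁ e₂ ⟨t₁, h₁⟩ ⟨t₂, h₂⟩
    exact ⟨t₂ ≫ t₁, by rw [End.mul_def, Category.assoc, h₁, ← Category.assoc, h₂,
      Category.assoc]⟩
  add_mem' := by
    rintro e₁ e₂ ⟨t₁, h₁⟩ ⟨t₂, h₂⟩
    exact ⟨t₁ + t₂, by rw [Preadditive.add_comp, h₁, h₂, Preadditive.comp_add]⟩
  algebraMap_mem' c := ⟨c • 𝟙 Y, by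
    rw [Algebra.algebraMap_eq_smul_one, End.one_def, Linear.comp_smul, Linear.smul_comp]; simp⟩

lemma mem_endsDescendingToCokernel_sigmaDesc {ι : Type*} {Z : ι → C} [HasCoproduct Z]
    (g : ∀ i, Z i ⟶ Y) {e : End Y} (h : ∀ i, ∃ t : Z i ⟶ ∐ Z, g i ≫ e = t ≫ Sigma.desc g) :
    e ∈ endsDescendingToCokernel R (Sigma.desc g) := by
  choose t ht using h
  exact ⟨Sigma.desc t, Sigma.hom_ext _ _ fun i => by simp [ht]⟩

lemma mem_endsRestrictingToKernel_piLift {ι : Type*} {Z : ι → C} [HasProduct Z]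
    (g : ∀ i, X ⟶ Z i) {e : End X} (h : ∀ i, ∃ t : ∏ᶜ Z ⟶ Z i, e ≫ g i = Pi.lift g ≫ t) :
    e ∈ endsRestrictingToKernel R (Pi.lift g) := by
  choose t ht using h
  exact ⟨Pi.lift t, Pi.hom_ext _ _ fun i => by simp [ht]⟩

section
variable [HasCokernel f]

noncomputable def cokernelEnd (e : endsDescendingToCokernel R f) : End (cokernel f) :=
  cokernel.desc f (e.1 ≫ cokernel.π f) (by
    obtain ⟨t, ht⟩ := e.2
    rw [← Category.assoc, ht, Category.assoc, cokernel.condition, comp_zero])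

@[simp]
lemma π_cokernelEnd (e : endsDescendingToCokernel R f) :
    cokernel.π f ≫ (cokernelEnd R f e : cokernel f ⟶ cokernel f) = e.1 ≫ cokernel.π f :=
  cokernel.π_desc _ _ _

noncomputable def cokernelEndHom : endsDescendingToCokernel R f →ₐ[R] End (cokernel f) where
  toFun := cokernelEnd R f
  map_one' := coequalizer.hom_ext (by simp [End.one_def])
  map_mul' x y := coequalizer.hom_ext (by
    rw [π_cokernelEnd, End.mul_def, ← Category.assoc, π_cokernelEnd, Category.assoc,
      π_cokernelEnd, ← Category.assoc]
    rfl)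
  map_zero' := coequalizer.hom_ext (by simp)
  map_add' x y := coequalizer.hom_ext (by
    rw [Preadditive.comp_add, π_cokernelEnd, π_cokernelEnd, π_cokernelEnd]
    exact Preadditive.add_comp _ _ _ x.1 y.1 _)
  commutes' c := coequalizer.hom_ext (by
    rw [π_cokernelEnd, Subalgebra.coe_algebraMap, Algebra.algebraMap_eq_smul_one,
      Algebra.algebraMap_eq_smul_one, Linear.comp_smul, End.one_def, End.one_def]
    exact (Linear.smul_comp _ _ _ _ _ _).trans (by simp))

lemma cokernelEndHom_eq_zero {e : endsDescendingToCokernel R f} {s : Y ⟶ X}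
    (he : e.1 = s ≫ f) : cokernelEndHom R f e = 0 :=
  coequalizer.hom_ext (by simp [cokernelEndHom, he])

end

section
variable [HasKernel f]

noncomputable def kernelEnd (e : endsRestrictingToKernel R f) : End (kernel f) :=
  kernel.lift f (kernel.ι f ≫ e.1) (by
    obtain ⟨t, ht⟩ := e.2
    rw [Category.assoc, ht, ← Category.assoc, kernel.condition, zero_comp])

@[simp]
lemma kernelEnd_ι (e : endsRestrictingToKernel R f) :
    (kernelEnd R f e : kernel f ⟶ kernel f) ≫ kernel.ι f = kernel.ι f ≫ e.1 :=
  kernel.lift_ι _ _ _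

noncomputable def kernelEndHom : endsRestrictingToKernel R f →ₐ[R] End (kernel f) where
  toFun := kernelEnd R f
  map_one' := equalizer.hom_ext (by simp [End.one_def])
  map_mul' x y := equalizer.hom_ext (by
    rw [kernelEnd_ι, End.mul_def, Category.assoc, kernelEnd_ι, ← Category.assoc, kernelEnd_ι,
      Category.assoc]
    rfl)
  map_zero' := equalizer.hom_ext (by simp)
  map_add' x y := equalizer.hom_ext (by
    rw [Preadditive.add_comp, kernelEnd_ι, kernelEnd_ι, kernelEnd_ι]
    exact Preadditive.comp_add _ _ _ _ x.1 y.1)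
  commutes' c := equalizer.hom_ext (by
    rw [kernelEnd_ι, Subalgebra.coe_algebraMap, Algebra.algebraMap_eq_smul_one,
      Algebra.algebraMap_eq_smul_one, Linear.smul_comp, End.one_def, End.one_def]
    exact (Linear.comp_smul _ _ _ _ _ _).trans (by simp))

lemma kernelEndHom_eq_zero {e : endsRestrictingToKernel R f} {s : Y ⟶ X}
    (he : e.1 = f ≫ s) : kernelEndHom R f e = 0 :=
  equalizer.hom_ext (by simp [kernelEndHom, he])

end

end CategoryTheory.Limits

namespace WeakMod

section

variable {P : WeakPair D} (V : WeakMod P)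

def actionAlgebra : Subalgebra k (End V.M) :=
  Algebra.adjoin k (Set.range V.π ∪ Set.range (fun g => (V.ν g : End V.M)) ∪ Set.range V.dν)

lemma π_mem_actionAlgebra (a : P.A) : V.π a ∈ V.actionAlgebra :=
  Algebra.subset_adjoin (.inl (.inl ⟨a, rfl⟩))

lemma ν_mem_actionAlgebra (g : D.G) : (V.ν g : End V.M) ∈ V.actionAlgebra :=
  Algebra.subset_adjoin (.inl (.inr ⟨g, rfl⟩))

lemma dν_mem_actionAlgebra (ξ : D.L) : V.dν ξ ∈ V.actionAlgebra :=
  Algebra.subset_adjoin (.inr ⟨ξ, rfl⟩)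

lemma actionAlgebra_le {S : Subalgebra k (End V.M)} (hπ : ∀ a, V.π a ∈ S)
    (hν : ∀ g, (V.ν g : End V.M) ∈ S) (hdν : ∀ ξ, V.dν ξ ∈ S) : V.actionAlgebra ≤ S :=
  Algebra.adjoin_le <| by
    rintro _ ((⟨a, rfl⟩ | ⟨g, rfl⟩) | ⟨ξ, rfl⟩)
    exacts [hπ a, hν g, hdν ξ]

def πIn : P.A →ₐ[k] V.actionAlgebra :=
  V.π.codRestrict _ V.π_mem_actionAlgebra

def νIn : D.G →* V.actionAlgebra :=
  ((Units.coeHom _).comp V.ν).codRestrict V.actionAlgebra V.ν_mem_actionAlgebra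

def dνIn : D.L →ₗ[k] V.actionAlgebra where
  toFun ξ := ⟨V.dν ξ, V.dν_mem_actionAlgebra ξ⟩
  map_add' _ _ := Subtype.ext (map_add V.dν _ _)
  map_smul' _ _ := Subtype.ext (map_smul V.dν _ _)

variable {V} {N : CochainComplex (ModuleCat.{0} k) ℤ} (ρ : V.actionAlgebra →ₐ[k] End N)

def transport : WeakMod P where
  M := N
  π := ρ.comp V.πIn
  ν := (ρ.toMonoidHom.comp V.νIn).toHomUnits
  dν := ρ.toLinearMap ∘ₗ V.dνIn
  dν_lie x y := by
    have h : V.dνIn ⁅x, y⁆ = V.dνIn x * V.dνIn y - V.dνIn y * V.dνIn x :=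
      Subtype.ext (V.dν_lie x y)
    simp [h]
  π_equiv g a := by
    have h : V.νIn g * V.πIn a = V.πIn (P.φ g a) * V.νIn g := Subtype.ext (V.π_equiv g a)
    simpa using congrArg ρ h
  dν_equiv g ξ := by
    have h : V.νIn g * V.dνIn ξ = V.dνIn (D.Ad g ξ) * V.νIn g := Subtype.ext (V.dν_equiv g ξ)
    simpa using congrArg ρ h
  dν_π ξ a := by
    have h : V.dνIn ξ * V.πIn a = V.πIn (P.dφ ξ a) + V.πIn a * V.dνIn ξ :=
      Subtype.ext (V.dν_π ξ a)
    simpa using congrArg ρ h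

def homToTransport (p : V.M ⟶ N) (hp : ∀ s : V.actionAlgebra, s.1 ≫ p = p ≫ ρ s) :
    V ⟶ transport ρ where
  hom := p
  comm_π a := hp (V.πIn a)
  comm_ν g := hp (V.νIn g)
  comm_dν ξ := hp (V.dνIn ξ)

def homFromTransport (p : N ⟶ V.M) (hp : ∀ s : V.actionAlgebra, ρ s ≫ p = p ≫ s.1) :
    transport ρ ⟶ V where
  hom := p
  comm_π a := hp (V.πIn a)
  comm_ν g := hp (V.νIn g)
  comm_dν ξ := hp (V.dνIn ξ)

lemma bijective_homToTransport_comp (p : V.M ⟶ N) [Epi p]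
    (hp : ∀ s : V.actionAlgebra, s.1 ≫ p = p ≫ ρ s) (W : WeakMod P)
    (hW : ∀ u : V ⟶ W, ∃ q : N ⟶ W.M, p ≫ q = u.hom) :
    Function.Bijective fun g : transport ρ ⟶ W => homToTransport ρ p hp ≫ g := by
  refine ⟨fun g₁ g₂ h => Hom.ext ((cancel_epi p).1 (congrArg Hom.hom h)), fun u => ?_⟩
  obtain ⟨q, hq⟩ := hW u
  have comm (s : V.actionAlgebra) (w : End W.M) (hs : s.1 ≫ u.hom = u.hom ≫ w) :
      ρ s ≫ q = q ≫ w := by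
    rw [← cancel_epi p, ← Category.assoc, ← hp, Category.assoc, hq, hs, ← hq, Category.assoc]
  exact ⟨⟨q, fun a => comm _ _ (u.comm_π a), fun g => comm _ _ (u.comm_ν g),
    fun ξ => comm _ _ (u.comm_dν ξ)⟩, Hom.ext hq⟩

lemma bijective_comp_homFromTransport (p : N ⟶ V.M) [Mono p]
    (hp : ∀ s : V.actionAlgebra, ρ s ≫ p = p ≫ s.1) (W : WeakMod P)
    (hW : ∀ u : W ⟶ V, ∃ q : W.M ⟶ N, q ≫ p = u.hom) :
    Function.Bijective fun g : W ⟶ transport ρ => g ≫ homFromTransport ρ p hp := by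
  refine ⟨fun g₁ g₂ h => Hom.ext ((cancel_mono p).1 (congrArg Hom.hom h)), fun u => ?_⟩
  obtain ⟨q, hq⟩ := hW u
  have comm (s : V.actionAlgebra) (w : End W.M) (hs : w ≫ u.hom = u.hom ≫ s.1) :
      w ≫ q = q ≫ ρ s := by
    rw [← cancel_mono p, Category.assoc, hq, hs, ← hq, Category.assoc, Category.assoc, hp]
  exact ⟨⟨q, fun a => comm _ _ (u.comm_π a), fun g => comm _ _ (u.comm_ν g),
    fun ξ => comm _ _ (u.comm_dν ξ)⟩, Hom.ext hq⟩

end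

section

variable {P : HCPair D} (V : WeakMod P.toWeakPair)

def ω (ξ : D.L) : End V.M := V.dν ξ - V.π (P.ψ ξ)

lemma commute_π_ω (a : P.A) (ξ : D.L) : Commute (V.π a) (V.ω ξ) := by
  have h := V.dν_π ξ a
  rw [P.dφ_eq, map_sub, map_mul, map_mul] at h
  rw [Commute, SemiconjBy, ω, mul_sub, sub_mul, ← map_mul, ← map_mul, map_mul, map_mul, h]
  abel

lemma ν_mul_ω (g : D.G) (ξ : D.L) : V.ν g * V.ω ξ = V.ω (D.Ad g ξ) * V.ν g := by
  rw [ω, ω, mul_sub, sub_mul, V.dν_equiv, V.π_equiv, P.ψ_equiv]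

lemma ω_mul_ν (g : D.G) (ξ : D.L) : V.ω ξ * V.ν g = V.ν g * V.ω (D.Ad g⁻¹ ξ) := by
  rw [ν_mul_ω, ← LinearEquiv.mul_apply, ← map_mul, mul_inv_cancel, map_one]
  rfl

lemma dν_mul_ω (η ξ : D.L) : V.dν η * V.ω ξ = V.ω ξ * V.dν η + V.ω ⁅η, ξ⁆ := by
  have h := V.dν_π η (P.ψ ξ)
  rw [P.dφ_eq, ← P.ψ_bracket] at h
  rw [ω, ω, mul_sub, sub_mul, h, V.dν_lie]
  abel

lemma ω_mul_dν (η ξ : D.L) : V.ω ξ * V.dν η = V.dν η * V.ω ξ - V.ω ⁅η, ξ⁆ := by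
  rw [dν_mul_ω, add_sub_cancel_right]

noncomputable def ωDesc : ∐ (fun _ : D.L => V.M) ⟶ V.M := Sigma.desc V.ω

noncomputable def ωLift : V.M ⟶ ∏ᶜ (fun _ : D.L => V.M) := Pi.lift V.ω

lemma ω_comp_hom {W : WeakMod P.toWeakPair} (u : V ⟶ W) (ξ : D.L) :
    (V.ω ξ : V.M ⟶ V.M) ≫ u.hom = u.hom ≫ (W.ω ξ : W.M ⟶ W.M) := by
  rw [ω, ω, Preadditive.sub_comp, Preadditive.comp_sub, u.comm_dν, u.comm_π]

lemma isStrict_iff_ω_eq_zero : IsStrict P V ↔ ∀ ξ, V.ω ξ = 0 :=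
  forall_congr' fun _ => sub_eq_zero.symm

lemma isStrict_transport {N : CochainComplex (ModuleCat.{0} k) ℤ}
    (ρ : V.actionAlgebra →ₐ[k] End N) (hρ : ∀ ξ, ρ (V.dνIn ξ - V.πIn (P.ψ ξ)) = 0) :
    IsStrict P (transport ρ) := fun ξ =>
  sub_eq_zero.1 ((map_sub ρ _ _).symm.trans (hρ ξ))

lemma actionAlgebra_le_endsDescendingToCokernel :
    V.actionAlgebra ≤ endsDescendingToCokernel k V.ωDesc := by
  refine V.actionAlgebra_le (fun a => ?_) (fun g => ?_) (fun η => ?_) <;>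
    refine mem_endsDescendingToCokernel_sigmaDesc k V.ω fun ξ => ?_
  · refine ⟨V.π a ≫ Sigma.ι (fun _ : D.L => V.M) ξ, ?_⟩
    rw [Category.assoc, Sigma.ι_desc]
    exact (V.commute_π_ω a ξ).eq
  · refine ⟨(V.ν g : End V.M) ≫ Sigma.ι (fun _ : D.L => V.M) (D.Ad g ξ), ?_⟩
    rw [Category.assoc, Sigma.ι_desc]
    exact V.ν_mul_ω g ξ
  · refine ⟨V.dν η ≫ Sigma.ι (fun _ : D.L => V.M) ξ + Sigma.ι (fun _ : D.L => V.M) ⁅η, ξ⁆, ?_⟩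
    rw [Preadditive.add_comp, Category.assoc, Sigma.ι_desc, Sigma.ι_desc]
    exact V.dν_mul_ω η ξ

lemma actionAlgebra_le_endsRestrictingToKernel :
    V.actionAlgebra ≤ endsRestrictingToKernel k V.ωLift := by
  refine V.actionAlgebra_le (fun a => ?_) (fun g => ?_) (fun η => ?_) <;>
    refine mem_endsRestrictingToKernel_piLift k V.ω fun ξ => ?_
  · refine ⟨Pi.π (fun _ : D.L => V.M) ξ ≫ V.π a, ?_⟩
    rw [← Category.assoc, Pi.lift_π]
    exact (V.commute_π_ω a ξ).eq.symm
  · refine ⟨Pi.π (fun _ : D.L => V.M) (D.Ad g⁻¹ ξ) ≫ (V.ν g : End V.M), ?_⟩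
    rw [← Category.assoc, Pi.lift_π]
    exact V.ω_mul_ν g ξ
  · refine ⟨Pi.π (fun _ : D.L => V.M) ξ ≫ V.dν η - Pi.π (fun _ : D.L => V.M) ⁅η, ξ⁆, ?_⟩
    rw [Preadditive.comp_sub, ← Category.assoc, Pi.lift_π, Pi.lift_π]
    exact V.ω_mul_dν η ξ

noncomputable def coinvariants : WeakMod P.toWeakPair :=
  transport ((cokernelEndHom k V.ωDesc).comp
    (Subalgebra.inclusion V.actionAlgebra_le_endsDescendingToCokernel))

noncomputable def invariants : WeakMod P.toWeakPair :=
  transport ((kernelEndHom k V.ωLift).comp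
    (Subalgebra.inclusion V.actionAlgebra_le_endsRestrictingToKernel))

lemma isStrict_coinvariants : IsStrict P V.coinvariants :=
  isStrict_transport V _ fun ξ =>
    (AlgHom.comp_apply _ _ _).trans (cokernelEndHom_eq_zero k _ (Sigma.ι_desc V.ω ξ).symm)

lemma isStrict_invariants : IsStrict P V.invariants :=
  isStrict_transport V _ fun ξ =>
    (AlgHom.comp_apply _ _ _).trans (kernelEndHom_eq_zero k _ (Pi.lift_π V.ω ξ).symm)

noncomputable def toCoinvariants : V ⟶ V.coinvariants :=
  homToTransport _ (cokernel.π V.ωDesc) fun s => (π_cokernelEnd k V.ωDesc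
    (Subalgebra.inclusion V.actionAlgebra_le_endsDescendingToCokernel s)).symm

noncomputable def fromInvariants : V.invariants ⟶ V :=
  homFromTransport _ (kernel.ι V.ωLift) fun s =>
    kernelEnd_ι k V.ωLift (Subalgebra.inclusion V.actionAlgebra_le_endsRestrictingToKernel s)

lemma ωDesc_comp_hom {W : WeakMod P.toWeakPair} (hW : IsStrict P W) (u : V ⟶ W) :
    V.ωDesc ≫ u.hom = 0 := Sigma.hom_ext _ _ fun ξ => by
  rw [ωDesc, Sigma.ι_desc_assoc, ω_comp_hom, (W.isStrict_iff_ω_eq_zero.1 hW) ξ, comp_zero,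
    comp_zero]

lemma hom_comp_ωLift {W : WeakMod P.toWeakPair} (hW : IsStrict P W) (u : W ⟶ V) :
    u.hom ≫ V.ωLift = 0 := Pi.hom_ext _ _ fun ξ => by
  rw [ωLift, Category.assoc, Pi.lift_π, ← ω_comp_hom, (W.isStrict_iff_ω_eq_zero.1 hW) ξ,
    zero_comp, zero_comp]

lemma bijective_toCoinvariants_comp (W : WeakMod P.toWeakPair) (hW : IsStrict P W) :
    Function.Bijective fun g : V.coinvariants ⟶ W => V.toCoinvariants ≫ g :=
  bijective_homToTransport_comp _ _ _ W fun u =>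
    ⟨cokernel.desc _ u.hom (V.ωDesc_comp_hom hW u), cokernel.π_desc _ _ _⟩

lemma bijective_comp_fromInvariants (W : WeakMod P.toWeakPair) (hW : IsStrict P W) :
    Function.Bijective fun g : W ⟶ V.invariants => g ≫ V.fromInvariants :=
  bijective_comp_homFromTransport _ _ _ W fun u =>
    ⟨kernel.lift _ u.hom (V.hom_comp_ωLift hW u), kernel.lift_ι _ _ _⟩

end

end WeakMod

theorem strict_inclusion_reflective_coreflective (P : HCPair D) :
    (ObjectProperty.ι (IsStrict P)).IsRightAdjoint ∧
      (ObjectProperty.ι (IsStrict P)).IsLeftAdjoint :=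
  ⟨ObjectProperty.isRightAdjoint_ι_of_bijective _ fun V =>
      ⟨V.coinvariants, V.isStrict_coinvariants, V.toCoinvariants, V.bijective_toCoinvariants_comp⟩,
    ObjectProperty.isLeftAdjoint_ι_of_bijective _ fun V =>
      ⟨V.invariants, V.isStrict_invariants, V.fromInvariants, V.bijective_comp_fromInvariants⟩⟩
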